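/- arXiv:1811.01455 — 6 statements merged into one kernel-verified Lean document; each statement's English description precedes it below -/
import Mathlib

section
/- For all real numbers α, β, x, y and every n ∈ ℕ, the generalized Euler matrices satisfy the product formula 𝓔^{(α+β)}(x+y) = 𝓔^{(α)}(x)·𝓔^{(β)}(y) = 𝓔^{(β)}(x)·𝓔^{(α)}(y) = 𝓔^{(α)}(y)·𝓔^{(β)}(x). -/
noncomputable section

/-- `E α x k` is the generalized Euler polynomial `E_k^{(α)}(x)`, characterized by the
generating function `(2/(e^z+1))^α e^{xz} = Σ_k E_k^{(α)}(x) z^k / k!` for `|z| < π`. -/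
def IsGenEulerFamily (E : ℝ → ℝ → ℕ → ℝ) : Prop :=
  ∀ α x z : ℝ, |z| < Real.pi →
    HasSum (fun k : ℕ => E α x k * z ^ k / (Nat.factorial k : ℝ))
      ((2 / (Real.exp z + 1)) ^ α * Real.exp (x * z))

/-- The generalized `(n+1)×(n+1)` Euler matrix `𝓔^{(α)}(x)`, with `(i,j)` entry
`C(i,j) E_{i-j}^{(α)}(x)` (which is `0` for `j > i` since then `C(i,j) = 0`). -/
def genEulerMatrix (E : ℝ → ℝ → ℕ → ℝ) (n : ℕ) (α x : ℝ) :
    Matrix (Fin (n + 1)) (Fin (n + 1)) ℝ :=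
  Matrix.of fun i j => (Nat.choose (i : ℕ) (j : ℕ) : ℝ) * E α x ((i : ℕ) - (j : ℕ))

/-!
The exponential generating function `(2/(e^z+1))^α e^{xz}` of `E_k^{(α)}(x)` is multiplicative in
the pair `(α, x)`. Comparing coefficients in the Cauchy product of two such series gives the
addition formula `E_k^{(α+β)}(x+y) = Σ_m C(k,m) E_{k-m}^{(α)}(x) E_m^{(β)}(y)`, and the identity
`C(i,l) C(l,j) = C(i,j) C(i-j,l-j)` turns the `(i,j)` entry of `𝓔^{(α)}(x) 𝓔^{(β)}(y)` into
`C(i,j)` times exactly this sum with `k = i - j`. The other two factorizations follow from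
`α + β = β + α` and `x + y = y + x`.
-/

open Finset FormalMultilinearSeries

theorem hasFPowerSeriesAt_ofScalars_of_hasSum {c : ℕ → ℝ} {f : ℝ → ℝ} {r : ℝ} (hr : 0 < r)
    (hf : ∀ z : ℝ, |z| < r → HasSum (fun k => c k * z ^ k) (f z)) :
    HasFPowerSeriesAt f (ofScalars ℝ c) 0 := by
  refine ⟨ENNReal.ofReal r, ?_, by simpa using hr, fun {z} hz => ?_⟩
  · refine ENNReal.le_of_forall_nnreal_lt fun ρ hρ => le_radius_of_summable_norm _ ?_
    have hρr : |(ρ : ℝ)| < r := by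
      rw [abs_of_nonneg ρ.coe_nonneg]
      exact (ENNReal.lt_ofReal_iff_toReal_lt ENNReal.coe_ne_top).mp hρ
    simpa [ofScalars_norm, abs_mul] using (hf ρ hρr).summable.abs
  · rw [Metric.eball_ofReal, Metric.mem_ball, dist_zero_right, Real.norm_eq_abs] at hz
    simpa [ofScalars_apply_eq, mul_comm] using hf z hz

theorem eq_of_hasSum_mul_pow {c c' : ℕ → ℝ} {f : ℝ → ℝ} {r : ℝ} (hr : 0 < r)
    (hc : ∀ z : ℝ, |z| < r → HasSum (fun k => c k * z ^ k) (f z))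
    (hc' : ∀ z : ℝ, |z| < r → HasSum (fun k => c' k * z ^ k) (f z)) : c = c' :=
  ofScalars_series_injective ℝ ℝ <|
    (hasFPowerSeriesAt_ofScalars_of_hasSum hr hc).eq_formalMultilinearSeries
      (hasFPowerSeriesAt_ofScalars_of_hasSum hr hc')

theorem eq_of_hasSum_mul_pow_div_factorial {c c' : ℕ → ℝ} {f : ℝ → ℝ} {r : ℝ} (hr : 0 < r)
    (hc : ∀ z : ℝ, |z| < r → HasSum (fun k => c k * z ^ k / k.factorial) (f z))
    (hc' : ∀ z : ℝ, |z| < r → HasSum (fun k => c' k * z ^ k / k.factorial) (f z)) : c = c' := by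
  have key := eq_of_hasSum_mul_pow (c := fun k => c k / k.factorial)
    (c' := fun k => c' k / k.factorial) hr
    (fun z hz => by simpa only [div_mul_eq_mul_div] using hc z hz)
    (fun z hz => by simpa only [div_mul_eq_mul_div] using hc' z hz)
  funext k
  simpa [Nat.factorial_ne_zero] using congrFun key k

theorem HasSum.mul_choose_convolution {a b : ℕ → ℝ} {z A B : ℝ}
    (ha : HasSum (fun k => a k * z ^ k / k.factorial) A)
    (hb : HasSum (fun k => b k * z ^ k / k.factorial) B) :
    HasSum (fun k => (∑ m ∈ range (k + 1), k.choose m * (a (k - m) * b m)) * z ^ k / k.factorial)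
      (A * B) := by
  have hprod := hasSum_sum_range_mul_of_summable_norm hb.summable.norm ha.summable.norm
  rw [hb.tsum_eq, ha.tsum_eq, mul_comm B] at hprod
  refine hprod.congr_fun fun k => ?_
  rw [sum_mul, sum_div]
  refine sum_congr rfl fun m hm => ?_
  have hmk : m ≤ k := Nat.lt_succ_iff.mp (mem_range.mp hm)
  rw [Nat.cast_choose ℝ hmk, ← Nat.add_sub_cancel' hmk, pow_add, Nat.add_sub_cancel_left]
  field_simp

theorem IsGenEulerFamily.apply_add_add {E : ℝ → ℝ → ℕ → ℝ} (hE : IsGenEulerFamily E)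
    (α β x y : ℝ) (k : ℕ) :
    E (α + β) (x + y) k = ∑ m ∈ range (k + 1), k.choose m * (E α x (k - m) * E β y m) := by
  refine congrFun (eq_of_hasSum_mul_pow_div_factorial (c' := fun k =>
    ∑ m ∈ range (k + 1), k.choose m * (E α x (k - m) * E β y m)) Real.pi_pos
    (hE (α + β) (x + y)) fun z hz => ?_) k
  have hgen : (2 / (Real.exp z + 1)) ^ (α + β) * Real.exp ((x + y) * z) =
      (2 / (Real.exp z + 1)) ^ α * Real.exp (x * z) *
        ((2 / (Real.exp z + 1)) ^ β * Real.exp (y * z)) := by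
    rw [Real.rpow_add (by positivity), add_mul, Real.exp_add]
    ring
  rw [hgen]
  exact (hE α x z hz).mul_choose_convolution (hE β y z hz)

theorem sum_choose_mul_choose_mul {R : Type*} [CommSemiring R] (f : ℕ → ℕ → R) {i N : ℕ}
    (hiN : i < N) (j : ℕ) :
    ∑ l ∈ range N, (i.choose l * l.choose j : R) * f (i - l) (l - j) =
      i.choose j * ∑ m ∈ range (i - j + 1), (i - j).choose m * f (i - j - m) m := by
  rcases lt_or_ge i j with hij | hji
  · rw [Nat.choose_eq_zero_of_lt hij, Nat.cast_zero, zero_mul]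
    refine sum_eq_zero fun l _ => ?_
    rcases lt_or_ge i l with hil | hli
    · simp [Nat.choose_eq_zero_of_lt hil]
    · simp [Nat.choose_eq_zero_of_lt (hli.trans_lt hij)]
  have hsub : Ico j (i + 1) ⊆ range N := fun l hl => by
    simp only [mem_Ico, mem_range] at hl ⊢; omega
  rw [← sum_subset hsub fun l _ hl => ?_, sum_Ico_eq_sum_range, mul_sum,
    Nat.sub_add_comm hji]
  · refine sum_congr rfl fun m hm => ?_
    have hm : m ≤ i - j := Nat.lt_succ_iff.mp (mem_range.mp hm)
    have hchoose := Nat.choose_mul (n := i) (k := j + m) (s := j) (by omega)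
    rw [Nat.add_sub_cancel_left] at hchoose
    rw [show i - (j + m) = i - j - m by omega, Nat.add_sub_cancel_left, ← mul_assoc,
      ← Nat.cast_mul, hchoose, Nat.cast_mul]
  · rcases lt_or_ge i l with hil | hli
    · simp [Nat.choose_eq_zero_of_lt hil]
    · have hlj : l < j := by simp only [mem_Ico] at hl; omega
      simp [Nat.choose_eq_zero_of_lt hlj]

theorem IsGenEulerFamily.genEulerMatrix_add_add {E : ℝ → ℝ → ℕ → ℝ} (hE : IsGenEulerFamily E)
    (n : ℕ) (α β x y : ℝ) :
    genEulerMatrix E n (α + β) (x + y) = genEulerMatrix E n α x * genEulerMatrix E n β y := by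
  ext i j
  have hsum := sum_choose_mul_choose_mul (fun p q => E α x p * E β y q) i.isLt j
  rw [← Fin.sum_univ_eq_sum_range (fun l => (i.val.choose l * l.choose j : ℝ) *
    (E α x (i - l) * E β y (l - j)))] at hsum
  simp only [genEulerMatrix, Matrix.mul_apply, Matrix.of_apply, hE.apply_add_add, ← hsum]
  exact sum_congr rfl fun l _ => by ring

theorem euler_matrix_product (E : ℝ → ℝ → ℕ → ℝ) (hE : IsGenEulerFamily E)
    (n : ℕ) (α β x y : ℝ) :
    genEulerMatrix E n (α + β) (x + y) = genEulerMatrix E n α x * genEulerMatrix E n β y ∧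
    genEulerMatrix E n (α + β) (x + y) = genEulerMatrix E n β x * genEulerMatrix E n α y ∧
    genEulerMatrix E n (α + β) (x + y) = genEulerMatrix E n α y * genEulerMatrix E n β x := by
  refine ⟨hE.genEulerMatrix_add_add n α β x y, ?_, ?_⟩
  · rw [add_comm α β]
    exact hE.genEulerMatrix_add_add n β α x y
  · rw [add_comm x y]
    exact hE.genEulerMatrix_add_add n α β y x
end
end

section
/- For every k ∈ ℕ with k ≥ 1, all real numbers α₁, …, α_k and all real numbers x₁, …, x_k, the generalized Euler matrices satisfy 𝓔^{(α₁+α₂+⋯+α_k)}(x₁+x₂+⋯+x_k) = 𝓔^{(α₁)}(x₁)·𝓔^{(α₂)}(x₂)·⋯·𝓔^{(α_k)}(x_k). -/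
/-! The matrix `𝓔^{(α)}(x)` is the binomial matrix `(C(i,j) c_{i-j})` of the sequence
`c = E^{(α)}(x)`, and binomial matrices multiply by binomial convolution of their sequences,
because `C(i,l) C(l,j) = C(i,j) C(i-j,i-l)`. The generating function is multiplicative in `(α, x)`,
the Cauchy product of two exponential generating functions is the exponential generating function
of the binomial convolution, and power series coefficients are unique, so
`E^{(α+β)}(x+y)` is the binomial convolution of `E^{(α)}(x)` and `E^{(β)}(y)`. Induction on `k`
finishes, the empty product being `𝓔^{(0)}(0) = 1`. -/

noncomputable section

open Finset
open scoped NNReal Nat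

section BinomialMatrix

variable {R : Type*} [CommSemiring R]

def binomialConvolution (c d : ℕ → R) (m : ℕ) : R :=
  ∑ p ∈ antidiagonal m, (m.choose p.1 : R) * c p.1 * d p.2

def binomialMatrix (n : ℕ) (c : ℕ → R) : Matrix (Fin (n + 1)) (Fin (n + 1)) R :=
  Matrix.of fun i j => ((i : ℕ).choose j : R) * c (i - j)

theorem Nat.choose_mul_eq_choose_mul_choose_sub {i l j : ℕ} (hjl : j ≤ l) (hli : l ≤ i) :
    i.choose l * l.choose j = i.choose j * (i - j).choose (i - l) := by
  rw [Nat.choose_mul hjl, Nat.choose_symm_of_eq_add (by omega : i - j = (l - j) + (i - l))]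

theorem binomialMatrix_mul (n : ℕ) (c d : ℕ → R) :
    binomialMatrix n c * binomialMatrix n d = binomialMatrix n (binomialConvolution c d) := by
  ext ⟨i, hi⟩ ⟨j, hj⟩
  simp only [binomialMatrix, binomialConvolution, Matrix.mul_apply, Matrix.of_apply, mul_sum]
  set term : ℕ → R := fun l => (i.choose l : R) * c (i - l) * (l.choose j * d (l - j))
  have hsub : Icc j i ⊆ range (n + 1) := fun l hl => by
    simp only [mem_Icc, mem_range] at hl ⊢
    omega
  have hvanish : ∀ l ∈ range (n + 1), l ∉ Icc j i → term l = 0 := by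
    intro l _ hl
    rcases lt_or_ge i l with h | h
    · simp [term, Nat.choose_eq_zero_of_lt h]
    · have : l < j := by
        simp only [mem_Icc, not_and, not_le] at hl
        omega
      simp [term, Nat.choose_eq_zero_of_lt this]
  rw [Fin.sum_univ_eq_sum_range term, ← sum_subset hsub hvanish]
  rcases lt_or_ge i j with hij | hji
  · simp [Nat.choose_eq_zero_of_lt hij, Icc_eq_empty_of_lt hij]
  refine sum_nbij' (fun l => (i - l, l - j)) (fun p => j + p.2) ?_ ?_ ?_ ?_ ?_ <;>
    simp only [mem_Icc, HasAntidiagonal.mem_antidiagonal]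
  · intro l hl; omega
  · intro p hp; omega
  · intro l hl; omega
  · intro p hp; ext <;> dsimp only <;> omega
  · intro l hl
    calc term l = ((i.choose l * l.choose j : ℕ) : R) * (c (i - l) * d (l - j)) := by
          push_cast; ring
      _ = _ := by rw [Nat.choose_mul_eq_choose_mul_choose_sub hl.1 hl.2]; push_cast; ring

theorem binomialMatrix_single_zero (n : ℕ) : binomialMatrix n (Pi.single 0 1 : ℕ → R) = 1 := by
  ext i j
  simp only [binomialMatrix, Matrix.of_apply, Matrix.one_apply, Pi.single_apply, Fin.ext_iff]
  rcases lt_trichotomy (i : ℕ) j with h | h | h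
  · simp [Nat.choose_eq_zero_of_lt h, h.ne]
  · simp [h]
  · simp [h.ne', Nat.sub_eq_zero_iff_le, h.not_ge]

end BinomialMatrix

theorem hasFPowerSeriesAt_ofScalars_of_hasSum_s2 {a : ℕ → ℝ} {f : ℝ → ℝ} {r : ℝ} (hr : 0 < r)
    (h : ∀ z, |z| < r → HasSum (fun n => a n * z ^ n) (f z)) :
    HasFPowerSeriesAt f (FormalMultilinearSeries.ofScalars ℝ a) 0 := by
  obtain ⟨ρ, hρ0, hρ⟩ := exists_between hr
  lift ρ to ℝ≥0 using hρ0.le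
  refine ⟨ρ, ?_, ENNReal.coe_pos.mpr (mod_cast hρ0), fun {y} hy => ?_⟩
  · apply FormalMultilinearSeries.le_radius_of_summable_norm
    have := (h ρ (by rwa [abs_of_nonneg ρ.coe_nonneg])).summable.abs
    simpa [FormalMultilinearSeries.ofScalars_norm, abs_mul] using this
  · have hy : |y| < r := by
      rw [Metric.mem_eball, edist_zero_right, enorm_eq_nnnorm, ENNReal.coe_lt_coe,
        ← NNReal.coe_lt_coe, coe_nnnorm, Real.norm_eq_abs] at hy
      exact hy.trans hρ
    simpa [FormalMultilinearSeries.ofScalars_apply_eq, mul_comm] using h y hy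

theorem eq_of_hasSum_pow_div_factorial {a b : ℕ → ℝ} {f : ℝ → ℝ} {r : ℝ} (hr : 0 < r)
    (ha : ∀ z, |z| < r → HasSum (fun n => a n * z ^ n / n !) (f z))
    (hb : ∀ z, |z| < r → HasSum (fun n => b n * z ^ n / n !) (f z)) : a = b := by
  have scaled (c : ℕ → ℝ) (hc : ∀ z, |z| < r → HasSum (fun n => c n * z ^ n / n !) (f z)) :
      HasFPowerSeriesAt f (FormalMultilinearSeries.ofScalars ℝ fun n => c n / n !) 0 :=
    hasFPowerSeriesAt_ofScalars_of_hasSum_s2 hr fun z hz =>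
      (hc z hz).congr_fun fun n => by ring
  have := FormalMultilinearSeries.ofScalars_series_injective ℝ ℝ
    ((scaled a ha).eq_formalMultilinearSeries (scaled b hb))
  funext n
  simpa [Nat.factorial_ne_zero] using congrFun this n

theorem HasSum.binomialConvolution_pow_div_factorial {𝕜 : Type*} [RCLike 𝕜] {a b : ℕ → 𝕜}
    {z A B : 𝕜} (ha : HasSum (fun n => a n * z ^ n / n !) A)
    (hb : HasSum (fun n => b n * z ^ n / n !) B) :
    HasSum (fun n => binomialConvolution a b n * z ^ n / n !) (A * B) := by
  have hna := summable_norm_iff.mpr ha.summable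
  have hnb := summable_norm_iff.mpr hb.summable
  have hCauchy := (summable_norm_sum_mul_antidiagonal_of_summable_norm hna hnb).of_norm.hasSum
  rw [← tsum_mul_tsum_eq_tsum_sum_antidiagonal_of_summable_norm hna hnb, ha.tsum_eq,
    hb.tsum_eq] at hCauchy
  refine hCauchy.congr_fun fun n => ?_
  simp only [binomialConvolution, sum_mul, sum_div]
  refine sum_congr rfl fun p hp => ?_
  obtain ⟨k, l⟩ := p
  obtain rfl : k + l = n := mem_antidiagonal.mp hp
  have hfac : ((k + l)! : 𝕜) ≠ 0 := Nat.cast_ne_zero.mpr (Nat.factorial_ne_zero _)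
  rw [Nat.cast_add_choose, pow_add]
  field_simp

section GenEuler

variable {E : ℝ → ℝ → ℕ → ℝ}

theorem IsGenEulerFamily.add (hE : IsGenEulerFamily E) (α β x y : ℝ) :
    E (α + β) (x + y) = binomialConvolution (E α x) (E β y) :=
  eq_of_hasSum_pow_div_factorial Real.pi_pos (hE _ _) fun z hz => by
    have hsplit : (2 / (Real.exp z + 1)) ^ (α + β) * Real.exp ((x + y) * z) =
        (2 / (Real.exp z + 1)) ^ α * Real.exp (x * z) *
          ((2 / (Real.exp z + 1)) ^ β * Real.exp (y * z)) := by
      rw [Real.rpow_add (by positivity), add_mul, Real.exp_add]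
      ring
    rw [hsplit]
    exact (hE α x z hz).binomialConvolution_pow_div_factorial (hE β y z hz)

theorem IsGenEulerFamily.zero_zero (hE : IsGenEulerFamily E) : E 0 0 = Pi.single 0 1 :=
  eq_of_hasSum_pow_div_factorial Real.pi_pos (hE 0 0) fun z _ => by
    convert hasSum_single (f := fun n => (Pi.single 0 1 : ℕ → ℝ) n * z ^ n / n !) 0
      (fun n hn => by simp [hn]) using 1
    simp

theorem genEulerMatrix_eq_binomialMatrix (n : ℕ) (α x : ℝ) :
    genEulerMatrix E n α x = binomialMatrix n (E α x) :=
  rfl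

theorem genEulerMatrix_add (hE : IsGenEulerFamily E) (n : ℕ) (α β x y : ℝ) :
    genEulerMatrix E n (α + β) (x + y) = genEulerMatrix E n α x * genEulerMatrix E n β y := by
  simp only [genEulerMatrix_eq_binomialMatrix, binomialMatrix_mul, hE.add]

theorem genEulerMatrix_zero_zero (hE : IsGenEulerFamily E) (n : ℕ) :
    genEulerMatrix E n 0 0 = 1 := by
  rw [genEulerMatrix_eq_binomialMatrix, hE.zero_zero, binomialMatrix_single_zero]

end GenEuler

theorem euler_matrix_product_formula_general (E : ℝ → ℝ → ℕ → ℝ) (hE : IsGenEulerFamily E)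
    (n : ℕ) (k : ℕ) (α x : Fin k → ℝ) :
    genEulerMatrix E n (∑ i, α i) (∑ i, x i)
      = (List.ofFn fun i : Fin k => genEulerMatrix E n (α i) (x i)).prod := by
  induction k with
  | zero => simp [genEulerMatrix_zero_zero hE]
  | succ k ih =>
    rw [Fin.sum_univ_succ, Fin.sum_univ_succ, List.ofFn_succ, List.prod_cons,
      genEulerMatrix_add hE, ih (fun i => α i.succ) (fun i => x i.succ)]

theorem euler_matrix_product_formula (E : ℝ → ℝ → ℕ → ℝ) (hE : IsGenEulerFamily E)
    (n : ℕ) (k : ℕ) (hk : 1 ≤ k) (α x : Fin k → ℝ) :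
    genEulerMatrix E n (∑ i, α i) (∑ i, x i)
      = (List.ofFn fun i : Fin k => genEulerMatrix E n (α i) (x i)).prod :=
  euler_matrix_product_formula_general E hE n k α x
end
end

section
/- For every real α and real x, the generalized Euler matrix factorizes through the Fibonacci matrix as 𝓔^{(α)}(x) = 𝓕·M^{(α)}(x) and 𝓔^{(α)}(x) = N^{(α)}(x)·𝓕. In particular, 𝓕·M(x) = 𝓔(x) = N(x)·𝓕, 𝓕·M(0) = 𝓔 = N(0)·𝓕, and 𝓕·M(1/2) = 𝔈 = N(1/2)·𝓕. -/
noncomputable section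

/-- The `(n+1)×(n+1)` Fibonacci matrix `𝓕`, with `(i,j)` entry `F_{i-j+1}` for `i ≥ j`
and `0` otherwise. -/
def fibMatrix (n : ℕ) : Matrix (Fin (n + 1)) (Fin (n + 1)) ℝ :=
  Matrix.of fun i j =>
    if (j : ℕ) ≤ (i : ℕ) then (Nat.fib ((i : ℕ) - (j : ℕ) + 1) : ℝ) else 0

/-- The matrix `M^{(α)}(x)`, with `(i,j)` entry
`C(i,j) E^{(α)}_{i-j}(x) - C(i-1,j) E^{(α)}_{i-j-1}(x) - C(i-2,j) E^{(α)}_{i-j-2}(x)`,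
where a term is `0` whenever its binomial coefficient vanishes. -/
def Mmatrix (E : ℝ → ℝ → ℕ → ℝ) (n : ℕ) (α x : ℝ) :
    Matrix (Fin (n + 1)) (Fin (n + 1)) ℝ :=
  Matrix.of fun i j =>
    (Nat.choose (i : ℕ) (j : ℕ) : ℝ) * E α x ((i : ℕ) - (j : ℕ))
    - (if 1 ≤ (i : ℕ) then
        (Nat.choose ((i : ℕ) - 1) (j : ℕ) : ℝ) * E α x ((i : ℕ) - 1 - (j : ℕ)) else 0)
    - (if 2 ≤ (i : ℕ) then
        (Nat.choose ((i : ℕ) - 2) (j : ℕ) : ℝ) * E α x ((i : ℕ) - 2 - (j : ℕ)) else 0)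

/-- The matrix `N^{(α)}(x)`, with `(i,j)` entry
`C(i,j) E^{(α)}_{i-j}(x) - C(i,j+1) E^{(α)}_{i-j-1}(x) - C(i,j+2) E^{(α)}_{i-j-2}(x)`,
where a term is `0` whenever its binomial coefficient vanishes. -/
def Nmatrix (E : ℝ → ℝ → ℕ → ℝ) (n : ℕ) (α x : ℝ) :
    Matrix (Fin (n + 1)) (Fin (n + 1)) ℝ :=
  Matrix.of fun i j =>
    (Nat.choose (i : ℕ) (j : ℕ) : ℝ) * E α x ((i : ℕ) - (j : ℕ))
    - (Nat.choose (i : ℕ) ((j : ℕ) + 1) : ℝ) * E α x ((i : ℕ) - ((j : ℕ) + 1))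
    - (Nat.choose (i : ℕ) ((j : ℕ) + 2) : ℝ) * E α x ((i : ℕ) - ((j : ℕ) + 2))

lemma key2 (b : ℕ → ℝ) (m : ℕ) :
    ∑ d ∈ Finset.range (m+1), (b d - b (d+1) - b (d+2)) * (Nat.fib (d+1) : ℝ)
      = b 0 - (Nat.fib (m+2) : ℝ) * b (m+1) - (Nat.fib (m+1) : ℝ) * b (m+2) := by
  induction m with
  | zero => simp [Nat.fib]
  | succ m ih =>
      rw [Finset.sum_range_succ, ih]
      have h : (Nat.fib (m+3) : ℝ) = (Nat.fib (m+2) : ℝ) + (Nat.fib (m+1) : ℝ) := by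
        have := Nat.fib_add_two (n := m+1)
        push_cast [this]; ring
      have h2 : m+1+1 = m+2 := rfl
      have h3 : m+1+2 = m+3 := rfl
      have h4 : m+2+1 = m+3 := rfl
      have h5 : m+2+2 = m+4 := rfl
      rw [h2, h3, h4, h5, show m+3+1 = m+4 from rfl] at *
      rw [h]
      ring

lemma key1 (a : ℕ → ℝ) (i : ℕ) :
    ∑ k ∈ Finset.range (i+1), (Nat.fib (i-k+1) : ℝ) *
      (a k - (if 1 ≤ k then a (k-1) else 0) - (if 2 ≤ k then a (k-2) else 0)) = a i := by
  set b : ℕ → ℝ := fun d => if d ≤ i then a (i-d) else 0 with hb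
  have := key2 b i
  rw [← Finset.sum_range_reflect] at this
  have heq : ∀ d ∈ Finset.range (i+1),
      (b (i+1-1-d) - b (i+1-1-d+1) - b (i+1-1-d+2)) * (Nat.fib (i+1-1-d+1) : ℝ)
      = (Nat.fib (i-d+1) : ℝ) *
        (a d - (if 1 ≤ d then a (d-1) else 0) - (if 2 ≤ d then a (d-2) else 0)) := by
    intro d hd
    rw [Finset.mem_range] at hd
    have hdi : d ≤ i := by omega
    have e1 : i+1-1-d = i-d := by omega
    rw [e1]
    simp only [hb]
    rw [if_pos (by omega : i - d ≤ i)]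
    have e2 : i - (i - d) = d := by omega
    rw [e2]
    by_cases h1 : 1 ≤ d
    · rw [if_pos (by omega : i - d + 1 ≤ i), if_pos h1,
        show i - (i - d + 1) = d - 1 by omega]
      by_cases h2 : 2 ≤ d
      · rw [if_pos (by omega : i - d + 2 ≤ i), if_pos h2,
          show i - (i - d + 2) = d - 2 by omega]; ring
      · rw [if_neg (by omega : ¬ (i - d + 2 ≤ i)), if_neg h2]; ring
    · rw [if_neg (by omega : ¬ (i - d + 1 ≤ i)), if_neg h1,
        if_neg (by omega : ¬ (i - d + 2 ≤ i)), if_neg (by omega : ¬ (2 ≤ d))]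
      ring
  rw [Finset.sum_congr rfl heq] at this
  rw [this]
  simp only [hb]
  rw [if_neg (by omega : ¬ (i+1 ≤ i)), if_neg (by omega : ¬ (i+2 ≤ i)),
    if_pos (Nat.zero_le i)]
  simp

lemma L1 (E : ℝ → ℝ → ℕ → ℝ) (n : ℕ) (α x : ℝ) :
    genEulerMatrix E n α x = fibMatrix n * Mmatrix E n α x := by
  ext i j
  set a : ℕ → ℝ := fun m => (Nat.choose m (j : ℕ) : ℝ) * E α x (m - (j : ℕ)) with ha
  set g : ℕ → ℝ := fun m =>
    (if m ≤ (i : ℕ) then (Nat.fib ((i : ℕ) - m + 1) : ℝ) else 0) *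
      (a m - (if 1 ≤ m then a (m-1) else 0) - (if 2 ≤ m then a (m-2) else 0)) with hg
  rw [Matrix.mul_apply]
  have hstep : ∀ k : Fin (n+1), fibMatrix n i k * Mmatrix E n α x k j = g (k : ℕ) := by
    intro k; rfl
  rw [Finset.sum_congr rfl (fun k _ => hstep k), Fin.sum_univ_eq_sum_range g (n+1)]
  have hsub : ∑ k ∈ Finset.range ((i : ℕ)+1), g k = ∑ k ∈ Finset.range (n+1), g k := by
    apply Finset.sum_subset
    · intro k hk
      rw [Finset.mem_range] at *
      have := i.isLt; omega
    · intro k _ hk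
      rw [Finset.mem_range] at hk
      rw [hg]
      simp only
      rw [if_neg (by omega)]
      ring
  rw [← hsub]
  have hfin : ∑ k ∈ Finset.range ((i : ℕ)+1), g k
      = ∑ k ∈ Finset.range ((i : ℕ)+1), (Nat.fib ((i : ℕ)-k+1) : ℝ) *
          (a k - (if 1 ≤ k then a (k-1) else 0) - (if 2 ≤ k then a (k-2) else 0)) := by
    apply Finset.sum_congr rfl
    intro k hk
    rw [Finset.mem_range] at hk
    rw [hg]; simp only; rw [if_pos (by omega)]
  rw [hfin, key1 a (i : ℕ)]
  rfl

lemma L2 (E : ℝ → ℝ → ℕ → ℝ) (n : ℕ) (α x : ℝ) :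
    genEulerMatrix E n α x = Nmatrix E n α x * fibMatrix n := by
  ext i j
  set b : ℕ → ℝ := fun m => (Nat.choose (i : ℕ) m : ℝ) * E α x ((i : ℕ) - m) with hb
  set g : ℕ → ℝ := fun m =>
    (b m - b (m+1) - b (m+2)) *
      (if (j : ℕ) ≤ m then (Nat.fib (m - (j : ℕ) + 1) : ℝ) else 0) with hg
  rw [Matrix.mul_apply]
  have hstep : ∀ k : Fin (n+1), Nmatrix E n α x i k * fibMatrix n k j = g (k : ℕ) := by
    intro k; rfl
  rw [Finset.sum_congr rfl (fun k _ => hstep k), Fin.sum_univ_eq_sum_range g (n+1)]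
  have hjn : (j : ℕ) ≤ n := by have := j.isLt; omega
  have hin : (i : ℕ) ≤ n := by have := i.isLt; omega
  have hsub : ∑ k ∈ Finset.Ico (j : ℕ) (n+1), g k = ∑ k ∈ Finset.range (n+1), g k := by
    apply Finset.sum_subset
    · intro k hk
      rw [Finset.mem_Ico] at hk
      rw [Finset.mem_range]; omega
    · intro k hk1 hk2
      rw [Finset.mem_range] at hk1
      rw [Finset.mem_Ico] at hk2
      rw [hg]; simp only
      rw [if_neg (by omega)]
      ring
  rw [← hsub, Finset.sum_Ico_eq_sum_range]
  have hlen : n + 1 - (j : ℕ) = (n - (j : ℕ)) + 1 := by omega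
  rw [hlen]
  have hfin : ∑ d ∈ Finset.range ((n - (j : ℕ)) + 1), g ((j : ℕ) + d)
      = ∑ d ∈ Finset.range ((n - (j : ℕ)) + 1),
          ((fun m => b ((j : ℕ) + m)) d - (fun m => b ((j : ℕ) + m)) (d+1)
            - (fun m => b ((j : ℕ) + m)) (d+2)) * (Nat.fib (d+1) : ℝ) := by
    apply Finset.sum_congr rfl
    intro d hd
    rw [hg]; simp only
    rw [if_pos (by omega), show (j : ℕ) + d - (j : ℕ) = d by omega]
    rfl
  rw [hfin, key2 (fun m => b ((j : ℕ) + m)) (n - (j : ℕ))]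
  rw [show (j : ℕ) + ((n - (j : ℕ)) + 1) = n + 1 by omega,
    show (j : ℕ) + ((n - (j : ℕ)) + 2) = n + 2 by omega]
  rw [hb]; simp only
  rw [Nat.choose_eq_zero_of_lt (by omega : (i : ℕ) < n + 1),
    Nat.choose_eq_zero_of_lt (by omega : (i : ℕ) < n + 2)]
  push_cast
  simp [genEulerMatrix, show (j : ℕ) + 0 = (j : ℕ) by omega]

theorem euler_matrix_fibonacci_factorization (E : ℝ → ℝ → ℕ → ℝ)
    (hE : IsGenEulerFamily E) (n : ℕ) (α x : ℝ) :
    genEulerMatrix E n α x = fibMatrix n * Mmatrix E n α x ∧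
    genEulerMatrix E n α x = Nmatrix E n α x * fibMatrix n ∧
    fibMatrix n * Mmatrix E n 1 x = genEulerMatrix E n 1 x ∧
    genEulerMatrix E n 1 x = Nmatrix E n 1 x * fibMatrix n ∧
    fibMatrix n * Mmatrix E n 1 0 = genEulerMatrix E n 1 0 ∧
    genEulerMatrix E n 1 0 = Nmatrix E n 1 0 * fibMatrix n ∧
    fibMatrix n * Mmatrix E n 1 (1 / 2) = genEulerMatrix E n 1 (1 / 2) ∧
    genEulerMatrix E n 1 (1 / 2) = Nmatrix E n 1 (1 / 2) * fibMatrix n :=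
  ⟨L1 E n α x, L2 E n α x, (L1 E n 1 x).symm, L2 E n 1 x, (L1 E n 1 0).symm,
    L2 E n 1 0, (L1 E n 1 (1 / 2)).symm, L2 E n 1 (1 / 2)⟩
end
end

section
/- For every real α and real x, the generalized Euler matrix factorizes through the Lucas matrix as 𝓔^{(α)}(x) = 𝓛·𝓛₁^{(α)}(x) and 𝓔^{(α)}(x) = 𝓛₂^{(α)}(x)·𝓛. In particular, 𝓛·𝓛₁(x) = 𝓔(x) = 𝓛₂(x)·𝓛 and 𝓛·𝓛₁(0) = 𝓔 = 𝓛₂(0)·𝓛. -/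
noncomputable section

/-- The Lucas sequence: `L_1 = 1`, `L_2 = 3`, `L_{m+2} = L_{m+1} + L_m` (so `L_0 = 2`). -/
def lucasSeq : ℕ → ℕ
  | 0 => 2
  | 1 => 1
  | m + 2 => lucasSeq (m + 1) + lucasSeq m

/-- The `(n+1)×(n+1)` Lucas matrix `𝓛`, with `(i,j)` entry `L_{i-j+1}` for `i ≥ j`
and `0` otherwise. -/
def lucasMatrix (n : ℕ) : Matrix (Fin (n + 1)) (Fin (n + 1)) ℝ :=
  Matrix.of fun i j =>
    if (j : ℕ) ≤ (i : ℕ) then (lucasSeq ((i : ℕ) - (j : ℕ) + 1) : ℝ) else 0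

/-- The matrix `𝓛₁^{(α)}(x)`, with `(i,j)` entry
`C(i,j) E^{(α)}_{i-j}(x) - 3 C(i-1,j) E^{(α)}_{i-j-1}(x)
  + 5 Σ_{k=j}^{i-2} (-1)^{i-k} 2^{i-k-2} C(k,j) E^{(α)}_{k-j}(x)`,
where terms with vanishing binomial coefficient are `0` and empty sums are `0`. -/
def L1matrix (E : ℝ → ℝ → ℕ → ℝ) (n : ℕ) (α x : ℝ) :
    Matrix (Fin (n + 1)) (Fin (n + 1)) ℝ :=
  Matrix.of fun i j =>
    (Nat.choose (i : ℕ) (j : ℕ) : ℝ) * E α x ((i : ℕ) - (j : ℕ))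
    - 3 * (if 1 ≤ (i : ℕ) then
        (Nat.choose ((i : ℕ) - 1) (j : ℕ) : ℝ) * E α x ((i : ℕ) - 1 - (j : ℕ)) else 0)
    + 5 * ∑ k ∈ Finset.Ico (j : ℕ) ((i : ℕ) - 1),
        (-1 : ℝ) ^ ((i : ℕ) - k) * 2 ^ ((i : ℕ) - k - 2) *
          (Nat.choose k (j : ℕ) : ℝ) * E α x (k - (j : ℕ))

/-- The matrix `𝓛₂^{(α)}(x)`, with `(i,j)` entry
`C(i,j) E^{(α)}_{i-j}(x) - 3 C(i,j+1) E^{(α)}_{i-j-1}(x)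
  + 5 Σ_{k=j+2}^{i} (-1)^{k-j} 2^{k-j-2} C(i,k) E^{(α)}_{i-k}(x)`,
where terms with vanishing binomial coefficient are `0` and empty sums are `0`. -/
def L2matrix (E : ℝ → ℝ → ℕ → ℝ) (n : ℕ) (α x : ℝ) :
    Matrix (Fin (n + 1)) (Fin (n + 1)) ℝ :=
  Matrix.of fun i j =>
    (Nat.choose (i : ℕ) (j : ℕ) : ℝ) * E α x ((i : ℕ) - (j : ℕ))
    - 3 * (Nat.choose (i : ℕ) ((j : ℕ) + 1) : ℝ) * E α x ((i : ℕ) - ((j : ℕ) + 1))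
    + 5 * ∑ k ∈ Finset.Icc ((j : ℕ) + 2) (i : ℕ),
        (-1 : ℝ) ^ (k - (j : ℕ)) * 2 ^ (k - (j : ℕ) - 2) *
          (Nat.choose (i : ℕ) k : ℝ) * E α x ((i : ℕ) - k)
namespace EulerLucasAux

/-- coefficient sequence of the inverse Lucas matrix -/
def c : ℕ → ℝ
  | 0 => 1
  | 1 => -3
  | m + 2 => 5 * (-2 : ℝ) ^ m

@[simp] lemma c_zero : c 0 = 1 := rfl
@[simp] lemma c_one : c 1 = -3 := rfl
lemma c_add_two (m : ℕ) : c (m + 2) = 5 * (-2 : ℝ) ^ m := rfl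

def Amat (n : ℕ) : Matrix (Fin (n + 1)) (Fin (n + 1)) ℝ :=
  Matrix.of fun i j => if (j : ℕ) ≤ (i : ℕ) then c ((i : ℕ) - (j : ℕ)) else 0

def gg (d : ℕ) : ℝ := ∑ t ∈ Finset.range (d + 1), (lucasSeq (t + 1) : ℝ) * c (d - t)

lemma gg_step (d : ℕ) : gg (d + 2) = -2 * gg (d + 1) := by
  unfold gg
  rw [show d + 2 + 1 = (d + 2) + 1 from rfl, Finset.sum_range_succ,
    Finset.sum_range_succ, Finset.sum_range_succ, Finset.sum_range_succ,
    Finset.sum_range_succ]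
  have e1 : d + 2 - (d + 2) = 0 := by omega
  have e2 : d + 2 - (d + 1) = 1 := by omega
  have e3 : d + 2 - d = 2 := by omega
  have e4 : d + 1 - (d + 1) = 0 := by omega
  have e5 : d + 1 - d = 1 := by omega
  rw [e1, e2, e3, e4, e5]
  have key : ∑ t ∈ Finset.range d, (lucasSeq (t + 1) : ℝ) * c (d + 2 - t)
      = -2 * ∑ t ∈ Finset.range d, (lucasSeq (t + 1) : ℝ) * c (d + 1 - t) := by
    rw [Finset.mul_sum]
    refine Finset.sum_congr rfl fun t ht => ?_
    rw [Finset.mem_range] at ht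
    have f1 : d + 2 - t = (d - 1 - t) + 3 := by omega
    have f2 : d + 1 - t = (d - 1 - t) + 2 := by omega
    rw [f1, f2, show (d - 1 - t) + 3 = ((d - 1 - t) + 1) + 2 from rfl,
      c_add_two, c_add_two, pow_succ]
    ring
  rw [key]
  have hl : (lucasSeq (d + 3) : ℝ) = (lucasSeq (d + 2) : ℝ) + (lucasSeq (d + 1) : ℝ) := by
    rw [show d + 3 = (d + 1) + 2 from rfl, lucasSeq]
    push_cast; ring
  rw [hl, c_zero, c_one, show c 2 = 5 * (-2:ℝ)^0 from rfl]
  ring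

lemma gg_pos (d : ℕ) : gg (d + 1) = 0 := by
  induction d with
  | zero =>
      unfold gg
      rw [Finset.sum_range_succ, Finset.sum_range_one]
      norm_num [lucasSeq, c]
  | succ k ih => rw [gg_step k, ih]; ring

lemma gg_eq (d : ℕ) : gg d = if d = 0 then 1 else 0 := by
  cases d with
  | zero => unfold gg; simp [lucasSeq]
  | succ k => simp [gg_pos k]

lemma gg_comm (d : ℕ) : (∑ t ∈ Finset.range (d + 1), c t * (lucasSeq (d - t + 1) : ℝ)) = gg d := by
  unfold gg
  rw [← Finset.sum_range_reflect]
  refine Finset.sum_congr rfl fun t ht => ?_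
  rw [Finset.mem_range] at ht
  rw [show d + 1 - 1 - t = d - t by omega, show d - (d - t) = t by omega, mul_comm]

lemma sum_Icc_LA {n : ℕ} (i j : Fin (n + 1)) (h : (j : ℕ) ≤ (i : ℕ)) :
    ∑ m ∈ Finset.Icc (j : ℕ) (i : ℕ),
      (lucasSeq ((i : ℕ) - m + 1) : ℝ) * c (m - (j : ℕ)) = gg ((i : ℕ) - (j : ℕ)) := by
  rw [show Finset.Icc (j : ℕ) (i : ℕ) = Finset.Ico (j : ℕ) ((i : ℕ) + 1) from rfl,
    Finset.sum_Ico_eq_sum_range, ← gg_comm ((i : ℕ) - (j : ℕ))]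
  rw [show (i : ℕ) + 1 - (j : ℕ) = ((i : ℕ) - (j : ℕ)) + 1 by omega]
  refine Finset.sum_congr rfl fun t ht => ?_
  rw [Finset.mem_range] at ht
  rw [show (i : ℕ) - ((j : ℕ) + t) = (i : ℕ) - (j : ℕ) - t by omega,
    show (j : ℕ) + t - (j : ℕ) = t by omega, mul_comm]

lemma sum_Icc_AL {n : ℕ} (i j : Fin (n + 1)) (h : (j : ℕ) ≤ (i : ℕ)) :
    ∑ m ∈ Finset.Icc (j : ℕ) (i : ℕ),
      c ((i : ℕ) - m) * (lucasSeq (m - (j : ℕ) + 1) : ℝ) = gg ((i : ℕ) - (j : ℕ)) := by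
  rw [show Finset.Icc (j : ℕ) (i : ℕ) = Finset.Ico (j : ℕ) ((i : ℕ) + 1) from rfl,
    Finset.sum_Ico_eq_sum_range]
  unfold gg
  rw [show (i : ℕ) + 1 - (j : ℕ) = ((i : ℕ) - (j : ℕ)) + 1 by omega]
  refine Finset.sum_congr rfl fun t ht => ?_
  rw [Finset.mem_range] at ht
  rw [show (i : ℕ) - ((j : ℕ) + t) = (i : ℕ) - (j : ℕ) - t by omega,
    show (j : ℕ) + t - (j : ℕ) = t by omega, mul_comm]

lemma one_entry {n : ℕ} (i j : Fin (n + 1)) (h : (j : ℕ) ≤ (i : ℕ)) :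
    gg ((i : ℕ) - (j : ℕ)) = if i = j then (1 : ℝ) else 0 := by
  rw [gg_eq]
  by_cases hij : i = j
  · rw [if_pos hij, if_pos (by subst hij; omega)]
  · rw [if_neg hij, if_neg (fun h0 => hij (Fin.ext (by omega)))]

lemma LA (n : ℕ) : lucasMatrix n * Amat n = 1 := by
  ext i j
  rw [Matrix.mul_apply, Matrix.one_apply]
  simp only [lucasMatrix, Amat, Matrix.of_apply]
  rw [Fin.sum_univ_eq_sum_range
    (fun m => (if m ≤ (i : ℕ) then (lucasSeq ((i : ℕ) - m + 1) : ℝ) else 0) *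
      (if (j : ℕ) ≤ m then c (m - (j : ℕ)) else 0)) (n + 1)]
  by_cases h : (j : ℕ) ≤ (i : ℕ)
  · have hsub : Finset.Icc (j : ℕ) (i : ℕ) ⊆ Finset.range (n + 1) := by
      intro m hm
      rw [Finset.mem_Icc] at hm
      rw [Finset.mem_range]
      omega
    have hz : ∀ m ∈ Finset.range (n + 1), m ∉ Finset.Icc (j : ℕ) (i : ℕ) →
        (if m ≤ (i : ℕ) then (lucasSeq ((i : ℕ) - m + 1) : ℝ) else 0) *
          (if (j : ℕ) ≤ m then c (m - (j : ℕ)) else 0) = 0 := by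
      intro m _ hm
      rw [Finset.mem_Icc] at hm
      push_neg at hm
      by_cases h2 : (j : ℕ) ≤ m
      · rw [if_neg (show ¬ m ≤ (i : ℕ) by have := hm h2; omega)]; ring
      · rw [if_neg h2]; ring
    rw [← Finset.sum_subset hsub hz]
    have step2 : ∑ m ∈ Finset.Icc (j : ℕ) (i : ℕ),
        (if m ≤ (i : ℕ) then (lucasSeq ((i : ℕ) - m + 1) : ℝ) else 0) *
          (if (j : ℕ) ≤ m then c (m - (j : ℕ)) else 0)
        = ∑ m ∈ Finset.Icc (j : ℕ) (i : ℕ),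
            (lucasSeq ((i : ℕ) - m + 1) : ℝ) * c (m - (j : ℕ)) := by
      refine Finset.sum_congr rfl fun m hm => ?_
      rw [Finset.mem_Icc] at hm
      rw [if_pos hm.2, if_pos hm.1]
    rw [step2, sum_Icc_LA i j h, one_entry i j h]
  · rw [if_neg (fun h0 => h (by rw [h0]))]
    refine Finset.sum_eq_zero fun m _ => ?_
    by_cases h1 : m ≤ (i : ℕ)
    · rw [if_neg (show ¬ (j : ℕ) ≤ m by omega)]; ring
    · rw [if_neg h1]; ring

lemma AL (n : ℕ) : Amat n * lucasMatrix n = 1 := by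
  ext i j
  rw [Matrix.mul_apply, Matrix.one_apply]
  simp only [lucasMatrix, Amat, Matrix.of_apply]
  rw [Fin.sum_univ_eq_sum_range
    (fun m => (if m ≤ (i : ℕ) then c ((i : ℕ) - m) else 0) *
      (if (j : ℕ) ≤ m then (lucasSeq (m - (j : ℕ) + 1) : ℝ) else 0)) (n + 1)]
  by_cases h : (j : ℕ) ≤ (i : ℕ)
  · have hsub : Finset.Icc (j : ℕ) (i : ℕ) ⊆ Finset.range (n + 1) := by
      intro m hm
      rw [Finset.mem_Icc] at hm
      rw [Finset.mem_range]
      omega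
    have hz : ∀ m ∈ Finset.range (n + 1), m ∉ Finset.Icc (j : ℕ) (i : ℕ) →
        (if m ≤ (i : ℕ) then c ((i : ℕ) - m) else 0) *
          (if (j : ℕ) ≤ m then (lucasSeq (m - (j : ℕ) + 1) : ℝ) else 0) = 0 := by
      intro m _ hm
      rw [Finset.mem_Icc] at hm
      push_neg at hm
      by_cases h2 : (j : ℕ) ≤ m
      · rw [if_neg (show ¬ m ≤ (i : ℕ) by have := hm h2; omega)]; ring
      · rw [if_neg h2]; ring
    rw [← Finset.sum_subset hsub hz]
    have step2 : ∑ m ∈ Finset.Icc (j : ℕ) (i : ℕ),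
        (if m ≤ (i : ℕ) then c ((i : ℕ) - m) else 0) *
          (if (j : ℕ) ≤ m then (lucasSeq (m - (j : ℕ) + 1) : ℝ) else 0)
        = ∑ m ∈ Finset.Icc (j : ℕ) (i : ℕ),
            c ((i : ℕ) - m) * (lucasSeq (m - (j : ℕ) + 1) : ℝ) := by
      refine Finset.sum_congr rfl fun m hm => ?_
      rw [Finset.mem_Icc] at hm
      rw [if_pos hm.2, if_pos hm.1]
    rw [step2, sum_Icc_AL i j h, one_entry i j h]
  · rw [if_neg (fun h0 => h (by rw [h0]))]
    refine Finset.sum_eq_zero fun m _ => ?_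
    by_cases h1 : m ≤ (i : ℕ)
    · rw [if_neg (show ¬ (j : ℕ) ≤ m by omega)]; ring
    · rw [if_neg h1]; ring

lemma neg_two_pow (s : ℕ) : (-2 : ℝ) ^ s = (-1 : ℝ) ^ s * 2 ^ s := by
  rw [show (-2 : ℝ) = -1 * 2 by norm_num, mul_pow]

lemma sum_L1 (E' : ℕ → ℝ) (i j : ℕ) :
    ∑ m ∈ Finset.range (i + 1), c (i - m) * ((Nat.choose m j : ℝ) * E' (m - j)) =
      (Nat.choose i j : ℝ) * E' (i - j)
      - 3 * (if 1 ≤ i then (Nat.choose (i - 1) j : ℝ) * E' (i - 1 - j) else 0)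
      + 5 * ∑ k ∈ Finset.Ico j (i - 1),
          (-1 : ℝ) ^ (i - k) * 2 ^ (i - k - 2) * (Nat.choose k j : ℝ) * E' (k - j) := by
  match i with
  | 0 => simp
  | 1 =>
      rw [Finset.sum_range_succ, Finset.sum_range_one]
      norm_num [c]
      ring
  | (i' + 2) =>
      rw [Finset.sum_range_succ, Finset.sum_range_succ,
        show i' + 2 - (i' + 1) = 1 by omega, show i' + 2 - (i' + 2) = 0 by omega,
        show i' + 2 - 1 = i' + 1 by omega]
      have hmain : ∑ m ∈ Finset.range (i' + 1), c (i' + 2 - m) * ((Nat.choose m j : ℝ) * E' (m - j))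
          = 5 * ∑ k ∈ Finset.Ico j (i' + 1),
              (-1 : ℝ) ^ (i' + 2 - k) * 2 ^ (i' + 2 - k - 2) * (Nat.choose k j : ℝ) * E' (k - j) := by
        have hsub : Finset.Ico j (i' + 1) ⊆ Finset.range (i' + 1) := by
          intro k hk
          rw [Finset.mem_Ico] at hk
          rw [Finset.mem_range]
          omega
        have hz : ∀ k ∈ Finset.range (i' + 1), k ∉ Finset.Ico j (i' + 1) →
            (-1 : ℝ) ^ (i' + 2 - k) * 2 ^ (i' + 2 - k - 2) * (Nat.choose k j : ℝ) * E' (k - j) = 0 := by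
          intro k hk1 hk
          rw [Finset.mem_range] at hk1
          rw [Finset.mem_Ico] at hk
          push_neg at hk
          have hkj : k < j := by
            by_contra hc
            exact absurd (hk (by omega)) (by omega)
          rw [Nat.choose_eq_zero_of_lt hkj]
          push_cast
          ring
        rw [Finset.sum_subset hsub hz, Finset.mul_sum]
        refine Finset.sum_congr rfl fun m hm => ?_
        rw [Finset.mem_range] at hm
        rw [show i' + 2 - m = (i' - m) + 2 by omega, c_add_two,
          show (i' - m) + 2 - 2 = i' - m by omega, neg_two_pow, pow_add]
        norm_num
        ring
      rw [hmain, if_pos (by omega), c_zero, c_one]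
      ring

lemma sum_L2 (E' : ℕ → ℝ) (n i j : ℕ) (hi : i ≤ n) (hj : j ≤ n) :
    ∑ m ∈ Finset.range (n + 1),
        (Nat.choose i m : ℝ) * E' (i - m) * (if j ≤ m then c (m - j) else 0) =
      (Nat.choose i j : ℝ) * E' (i - j)
      - 3 * (Nat.choose i (j + 1) : ℝ) * E' (i - (j + 1))
      + 5 * ∑ k ∈ Finset.Icc (j + 2) i,
          (-1 : ℝ) ^ (k - j) * 2 ^ (k - j - 2) * (Nat.choose i k : ℝ) * E' (i - k) := by
  have hstep : ∑ m ∈ Finset.range (n + 1),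
      (Nat.choose i m : ℝ) * E' (i - m) * (if j ≤ m then c (m - j) else 0)
      = ∑ t ∈ Finset.range (n + 1 - j),
          (Nat.choose i (j + t) : ℝ) * E' (i - (j + t)) * c (j + t - j) := by
    have hsub : Finset.Ico j (n + 1) ⊆ Finset.range (n + 1) := by
      intro m hm
      rw [Finset.mem_Ico] at hm
      rw [Finset.mem_range]
      omega
    have hz : ∀ m ∈ Finset.range (n + 1), m ∉ Finset.Ico j (n + 1) →
        (Nat.choose i m : ℝ) * E' (i - m) * (if j ≤ m then c (m - j) else 0) = 0 := by
      intro m hm1 hm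
      rw [Finset.mem_range] at hm1
      rw [Finset.mem_Ico] at hm
      push_neg at hm
      rw [if_neg (show ¬ j ≤ m by intro hc; exact absurd (hm hc) (by omega))]
      ring
    rw [← Finset.sum_subset hsub hz, Finset.sum_Ico_eq_sum_range]
    refine Finset.sum_congr rfl fun t ht => ?_
    rw [if_pos (by omega)]
  rw [hstep]
  rcases Nat.lt_or_ge (j + 1) (n + 1) with hj1 | hj1
  · -- j ≤ n - 1, so n + 1 - j = s + 2 with s = n - j - 1
    obtain ⟨s, hs⟩ : ∃ s, n + 1 - j = s + 2 := ⟨n - j - 1, by omega⟩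
    rw [hs, Finset.sum_range_succ', Finset.sum_range_succ']
    have h0 : (Nat.choose i (j + 0) : ℝ) * E' (i - (j + 0)) * c (j + 0 - j)
        = (Nat.choose i j : ℝ) * E' (i - j) := by
      rw [show j + 0 = j from rfl, show j - j = 0 by omega, c_zero]
      ring
    have h1 : (Nat.choose i (j + (0 + 1)) : ℝ) * E' (i - (j + (0 + 1))) * c (j + (0 + 1) - j)
        = -3 * ((Nat.choose i (j + 1) : ℝ) * E' (i - (j + 1))) := by
      rw [show j + (0 + 1) = j + 1 by omega, show j + 1 - j = 1 by omega, c_one]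
      ring
    have hmain : ∑ t ∈ Finset.range s,
        (Nat.choose i (j + (t + 1 + 1)) : ℝ) * E' (i - (j + (t + 1 + 1))) * c (j + (t + 1 + 1) - j)
        = 5 * ∑ k ∈ Finset.Icc (j + 2) i,
            (-1 : ℝ) ^ (k - j) * 2 ^ (k - j - 2) * (Nat.choose i k : ℝ) * E' (i - k) := by
      have hsub2 : Finset.Icc (j + 2) i ⊆ Finset.Ico (j + 2) (j + 2 + s) := by
        intro k hk
        rw [Finset.mem_Icc] at hk
        rw [Finset.mem_Ico]
        omega
      have hz2 : ∀ k ∈ Finset.Ico (j + 2) (j + 2 + s), k ∉ Finset.Icc (j + 2) i →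
          (-1 : ℝ) ^ (k - j) * 2 ^ (k - j - 2) * (Nat.choose i k : ℝ) * E' (i - k) = 0 := by
        intro k hk1 hk
        rw [Finset.mem_Ico] at hk1
        rw [Finset.mem_Icc] at hk
        push_neg at hk
        rw [Nat.choose_eq_zero_of_lt (hk hk1.1)]
        push_cast
        ring
      rw [Finset.sum_subset hsub2 hz2, Finset.sum_Ico_eq_sum_range,
        show j + 2 + s - (j + 2) = s by omega, Finset.mul_sum]
      refine Finset.sum_congr rfl fun t ht => ?_
      rw [show j + 2 + t - j = t + 2 by omega, show t + 2 - 2 = t by omega,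
        show j + (t + 1 + 1) - j = t + 2 by omega, show j + (t + 1 + 1) = j + 2 + t by omega,
        c_add_two, neg_two_pow, pow_add]
      norm_num
      ring
    rw [h0, h1, hmain]
    ring
  · -- j = n, so i ≤ j
    have hjn : j = n := by omega
    rw [show n + 1 - j = 0 + 1 by omega, Finset.sum_range_one]
    have hIcc : Finset.Icc (j + 2) i = ∅ := by
      apply Finset.Icc_eq_empty
      omega
    rw [hIcc, Finset.sum_empty, Nat.choose_eq_zero_of_lt (show i < j + 1 by omega),
      show j + 0 = j from rfl, show j - j = 0 by omega, c_zero]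
    push_cast
    ring

lemma L1eq (E : ℝ → ℝ → ℕ → ℝ) (n : ℕ) (α x : ℝ) :
    Amat n * genEulerMatrix E n α x = L1matrix E n α x := by
  ext i j
  rw [Matrix.mul_apply]
  simp only [Amat, genEulerMatrix, L1matrix, Matrix.of_apply]
  rw [Fin.sum_univ_eq_sum_range
    (fun m => (if m ≤ (i : ℕ) then c ((i : ℕ) - m) else 0) *
      ((Nat.choose m (j : ℕ) : ℝ) * E α x (m - (j : ℕ)))) (n + 1)]
  have hsub : Finset.range ((i : ℕ) + 1) ⊆ Finset.range (n + 1) := by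
    intro m hm
    rw [Finset.mem_range] at hm ⊢
    have := i.isLt
    omega
  have hz : ∀ m ∈ Finset.range (n + 1), m ∉ Finset.range ((i : ℕ) + 1) →
      (if m ≤ (i : ℕ) then c ((i : ℕ) - m) else 0) *
        ((Nat.choose m (j : ℕ) : ℝ) * E α x (m - (j : ℕ))) = 0 := by
    intro m _ hm
    rw [Finset.mem_range] at hm
    rw [if_neg (show ¬ m ≤ (i : ℕ) by omega)]
    ring
  rw [← Finset.sum_subset hsub hz]
  have hcongr : ∑ m ∈ Finset.range ((i : ℕ) + 1),
      (if m ≤ (i : ℕ) then c ((i : ℕ) - m) else 0) *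
        ((Nat.choose m (j : ℕ) : ℝ) * E α x (m - (j : ℕ)))
      = ∑ m ∈ Finset.range ((i : ℕ) + 1),
          c ((i : ℕ) - m) * ((Nat.choose m (j : ℕ) : ℝ) * E α x (m - (j : ℕ))) := by
    refine Finset.sum_congr rfl fun m hm => ?_
    rw [Finset.mem_range] at hm
    rw [if_pos (by omega)]
  rw [hcongr, sum_L1 (E α x) (i : ℕ) (j : ℕ)]

lemma L2eq (E : ℝ → ℝ → ℕ → ℝ) (n : ℕ) (α x : ℝ) :
    genEulerMatrix E n α x * Amat n = L2matrix E n α x := by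
  ext i j
  rw [Matrix.mul_apply]
  simp only [Amat, genEulerMatrix, L2matrix, Matrix.of_apply]
  rw [Fin.sum_univ_eq_sum_range
    (fun m => (Nat.choose (i : ℕ) m : ℝ) * E α x ((i : ℕ) - m) *
      (if (j : ℕ) ≤ m then c (m - (j : ℕ)) else 0)) (n + 1)]
  have hi : (i : ℕ) ≤ n := by have := i.isLt; omega
  have hj : (j : ℕ) ≤ n := by have := j.isLt; omega
  rw [sum_L2 (E α x) n (i : ℕ) (j : ℕ) hi hj]

end EulerLucasAux

open EulerLucasAux in

theorem euler_matrix_lucas_factorization (E : ℝ → ℝ → ℕ → ℝ)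
    (hE : IsGenEulerFamily E) (n : ℕ) (α x : ℝ) :
    genEulerMatrix E n α x = lucasMatrix n * L1matrix E n α x ∧
    genEulerMatrix E n α x = L2matrix E n α x * lucasMatrix n ∧
    lucasMatrix n * L1matrix E n 1 x = genEulerMatrix E n 1 x ∧
    genEulerMatrix E n 1 x = L2matrix E n 1 x * lucasMatrix n ∧
    lucasMatrix n * L1matrix E n 1 0 = genEulerMatrix E n 1 0 ∧
    genEulerMatrix E n 1 0 = L2matrix E n 1 0 * lucasMatrix n := by
  have h1 : ∀ β y : ℝ, genEulerMatrix E n β y = lucasMatrix n * L1matrix E n β y := by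
    intro β y
    rw [← L1eq E n β y, ← Matrix.mul_assoc, LA n, Matrix.one_mul]
  have h2 : ∀ β y : ℝ, genEulerMatrix E n β y = L2matrix E n β y * lucasMatrix n := by
    intro β y
    rw [← L2eq E n β y, Matrix.mul_assoc, AL n, Matrix.mul_one]
  exact ⟨h1 α x, h2 α x, (h1 1 x).symm, h2 1 x, (h1 1 0).symm, h2 1 0⟩
end
end

section
/- For all n, r ∈ ℕ with 0 ≤ r ≤ n, every real α and every real x, one has C(n,r)·E^{(α)}_{n−r}(x) = F_{n−r+1} + [(r+1)x − ((r+1)α + 2)/2]·F_{n−r} + Σ_{k=r+2}^{n} C(k,r)·{E^{(α)}_{k−r}(x) − ((k−r)/k)·[E^{(α)}_{k−r−1}(x) + ((k−r−1)/(k−1))·E^{(α)}_{k−r−2}(x)]}·F_{n−k+1}, and also C(n,r)·E^{(α)}_{n−r}(x) = F_{n−r+1} + [n(x − α/2) − 1]·F_{n−r} + Σ_{k=0}^{n−2} C(n,k)·{E^{(α)}_{n−k}(x) − ((n−k)/(k+1))·[E^{(α)}_{n−k−1}(x) + ((n−k−1)/(k+2))·E^{(α)}_{n−k−2}(x)]}·F_{k−r+1},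 where F_m := 0 for integers m ≤ 0. -/
/-! Both identities are instances of a fact about an arbitrary real sequence `c`: inverting the
recurrence `c j = c (j - 1) + c (j - 2) + d j` gives
`c m = c 0 * F (m + 1) + (c 1 - c 0) * F m + ∑_{j ≥ 2} d j * F (m - j + 1)`.
For `c j = C(j + r, r) * E_j` and for `c j = C(n, j) * E_j` the absorption identities for binomial
coefficients turn `d j` into the summands of the two identities, and the generating function
supplies the boundary values `E_0 = 1` and `E_1 = x - α / 2`. -/

noncomputable section

/-- The Fibonacci sequence extended to the integers by `F_m = 0` for `m ≤ 0`. -/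
def fibZ (m : ℤ) : ℝ := if 0 < m then (Nat.fib m.toNat : ℝ) else 0

open Finset

theorem fibZ_of_nonpos {m : ℤ} (hm : m ≤ 0) : fibZ m = 0 := if_neg hm.not_gt

theorem fibZ_natCast (m : ℕ) : fibZ m = Nat.fib m := by
  unfold fibZ
  split_ifs with h
  · simp
  · simp [show m = 0 by omega]

theorem fibZ_add_two (t : ℤ) :
    fibZ (t + 2) = fibZ (t + 1) + fibZ t + if t = -1 then 1 else 0 := by
  rcases lt_trichotomy t (-1) with h | rfl | h
  · simp [fibZ_of_nonpos, h.ne, show t + 2 ≤ 0 by omega, show t + 1 ≤ 0 by omega,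
      show t ≤ 0 by omega]
  · norm_num [fibZ]
  · lift t to ℕ using (by omega)
    have hfib := congrArg (Nat.cast : ℕ → ℝ) (Nat.fib_add_two (n := t))
    push_cast [← fibZ_natCast] at hfib
    rw [if_neg (by omega)]
    linarith

theorem eq_fibZ_convolution (c : ℕ → ℝ) {m M : ℕ} (hm : m ≤ M) :
    c m = c 0 * fibZ (m + 1) + (c 1 - c 0) * fibZ m
      + ∑ j ∈ Icc 2 M, (c j - c (j - 1) - c (j - 2)) * fibZ ((m : ℤ) - j + 1) := by
  induction m using Nat.strong_induction_on with
  | _ m ih =>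
  match m with
  | 0 | 1 =>
    rw [sum_eq_zero fun j hj => by rw [fibZ_of_nonpos (by simp at hj; omega), mul_zero]]
    norm_num [fibZ, show Int.toNat 2 = 2 from rfl]
  | m + 2 =>
    have hsplit : ∑ j ∈ Icc 2 M, (c j - c (j - 1) - c (j - 2)) * fibZ (((m + 2 : ℕ) : ℤ) - j + 1)
        = ∑ j ∈ Icc 2 M, (c j - c (j - 1) - c (j - 2)) * fibZ (((m + 1 : ℕ) : ℤ) - j + 1)
          + ∑ j ∈ Icc 2 M, (c j - c (j - 1) - c (j - 2)) * fibZ ((m : ℤ) - j + 1)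
          + (c (m + 2) - c (m + 1) - c m) := by
      have hlast : c (m + 2) - c (m + 1) - c m
          = ∑ j ∈ Icc 2 M, if j = m + 2 then c j - c (j - 1) - c (j - 2) else 0 := by
        rw [sum_ite_eq_of_mem' _ _ _ (by simp; omega)]; rfl
      rw [hlast, ← sum_add_distrib, ← sum_add_distrib]
      refine sum_congr rfl fun j _ => ?_
      have hrec := fibZ_add_two ((m : ℤ) - j + 1)
      simp only [show (m : ℤ) - j + 1 = -1 ↔ j = m + 2 by omega] at hrec
      push_cast
      rw [show (m : ℤ) + 2 - j + 1 = (m : ℤ) - j + 1 + 2 by ring,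
        show (m : ℤ) + 1 - j + 1 = (m : ℤ) - j + 1 + 1 by ring, hrec]
      split_ifs <;> ring
    have h1 := fibZ_add_two ((m : ℤ) + 1)
    have h0 := fibZ_add_two (m : ℤ)
    rw [if_neg (by omega)] at h0 h1
    have ih1 := ih (m + 1) (by omega) (by omega)
    have ih0 := ih m (by omega) (by omega)
    rw [hsplit]
    push_cast at ih1 h1 ⊢
    rw [show (m : ℤ) + 1 + 1 = m + 2 by ring] at ih1 h1
    rw [show (m : ℤ) + 1 + 2 = m + 2 + 1 by ring] at h1
    linear_combination ih1 + ih0 - c 0 * h1 - (c 1 - c 0) * h0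

theorem Nat.cast_choose_mul_sub_div {m : ℕ} (k : ℕ) (hm : 0 < m) :
    (m.choose k : ℝ) * ((m - k) / m) = (m - 1).choose k := by
  obtain ⟨m, rfl⟩ := Nat.exists_eq_add_of_lt hm
  rw [zero_add, Nat.add_sub_cancel]
  rcases le_or_gt k (m + 1) with hk | hk
  · have h := Nat.choose_mul_succ_eq m k
    rw [← Nat.cast_inj (R := ℝ)] at h
    push_cast [hk] at h ⊢
    field_simp
    linarith
  · simp [Nat.choose_eq_zero_of_lt hk, Nat.choose_eq_zero_of_lt (show m < k by omega)]

theorem Nat.cast_choose_mul_sub_div_succ (n k : ℕ) :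
    (n.choose k : ℝ) * ((n - k) / (k + 1)) = n.choose (k + 1) := by
  rcases le_or_gt k n with hk | hk
  · have h := Nat.choose_succ_right_eq n k
    rw [← Nat.cast_inj (R := ℝ)] at h
    push_cast [hk] at h
    field_simp
    linarith
  · simp [Nat.choose_eq_zero_of_lt hk, Nat.choose_eq_zero_of_lt (show n < k + 1 by omega)]

theorem mul_sub_mul_add_mul_eq {R : Type*} [CommRing R] {b₀ b₁ b₂ p q : R} (e₀ e₁ e₂ : R)
    (h₁ : b₀ * p = b₁) (h₂ : b₁ * q = b₂) :
    b₀ * (e₀ - p * (e₁ + q * e₂)) = b₀ * e₀ - b₁ * e₁ - b₂ * e₂ := by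
  linear_combination (-e₁ - q * e₂) * h₁ - e₂ * h₂

theorem choose_mul_eq_fibZ_sum_Icc (e : ℕ → ℝ) {n r : ℕ} (hrn : r ≤ n) :
    (n.choose r : ℝ) * e (n - r)
      = e 0 * fibZ ((n : ℤ) - r + 1) + (((r : ℝ) + 1) * e 1 - e 0) * fibZ ((n : ℤ) - r)
        + ∑ k ∈ Icc (r + 2) n, (k.choose r : ℝ) * (e (k - r) - ((k : ℝ) - r) / k *
            (e (k - r - 1) + ((k : ℝ) - r - 1) / ((k : ℝ) - 1) * e (k - r - 2)))
              * fibZ ((n : ℤ) - k + 1) := by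
  set c : ℕ → ℝ := fun j => ((j + r).choose r : ℝ) * e j
  have hsum : ∑ k ∈ Icc (r + 2) n, (k.choose r : ℝ) * (e (k - r) - ((k : ℝ) - r) / k *
        (e (k - r - 1) + ((k : ℝ) - r - 1) / ((k : ℝ) - 1) * e (k - r - 2)))
          * fibZ ((n : ℤ) - k + 1)
      = ∑ j ∈ Icc 2 (n - r), (c j - c (j - 1) - c (j - 2)) * fibZ (((n - r : ℕ) : ℤ) - j + 1) := by
    refine sum_nbij' (· - r) (· + r) (by simp; omega) (by simp; omega) (by simp; omega)
      (by simp) fun k hk => ?_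
    rw [mem_Icc] at hk
    have h₁ := Nat.cast_choose_mul_sub_div r (m := k) (by omega)
    have h₂ := Nat.cast_choose_mul_sub_div r (m := k - 1) (by omega)
    rw [Nat.cast_sub (by omega : 1 ≤ k), Nat.cast_one, sub_right_comm, Nat.sub_sub] at h₂
    simp only [c, show k - r + r = k by omega, show k - r - 1 + r = k - 1 by omega,
      show k - r - 2 + r = k - 2 by omega]
    rw [mul_sub_mul_add_mul_eq _ _ _ h₁ h₂,
      show ((n - r : ℕ) : ℤ) - (k - r : ℕ) + 1 = n - k + 1 by omega]
  calc (n.choose r : ℝ) * e (n - r) = c (n - r) := by simp [c, Nat.sub_add_cancel hrn]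
    _ = _ := eq_fibZ_convolution c le_rfl
    _ = _ := by
      rw [hsum]
      simp [c, Nat.cast_sub hrn, add_comm 1 r, Nat.choose_succ_self_right]

theorem choose_mul_eq_fibZ_sum_range (e : ℕ → ℝ) {n r : ℕ} (hrn : r ≤ n) :
    (n.choose r : ℝ) * e (n - r)
      = e 0 * fibZ ((n : ℤ) - r + 1) + ((n : ℝ) * e 1 - e 0) * fibZ ((n : ℤ) - r)
        + ∑ k ∈ range (n - 1), (n.choose k : ℝ) * (e (n - k) - ((n : ℝ) - k) / ((k : ℝ) + 1) *
            (e (n - k - 1) + ((n : ℝ) - k - 1) / ((k : ℝ) + 2) * e (n - k - 2)))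
              * fibZ ((k : ℤ) - r + 1) := by
  set c : ℕ → ℝ := fun j => (n.choose j : ℝ) * e j
  have hsum : ∑ k ∈ range (n - 1),
        (n.choose k : ℝ) * (e (n - k) - ((n : ℝ) - k) / ((k : ℝ) + 1) *
          (e (n - k - 1) + ((n : ℝ) - k - 1) / ((k : ℝ) + 2) * e (n - k - 2)))
          * fibZ ((k : ℤ) - r + 1)
      = ∑ j ∈ Icc 2 n, (c j - c (j - 1) - c (j - 2)) * fibZ (((n - r : ℕ) : ℤ) - j + 1) := by
    refine sum_nbij' (n - ·) (n - ·) (by simp; omega) (by simp; omega) (by simp; omega)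
      (by simp; omega) fun k hk => ?_
    rw [mem_range] at hk
    have h₁ := Nat.cast_choose_mul_sub_div_succ n k
    have h₂ : (n.choose (k + 1) : ℝ) * ((n - k - 1) / (k + 2)) = n.choose (k + 2) := by
      convert Nat.cast_choose_mul_sub_div_succ n (k + 1) using 3 <;> push_cast <;> ring
    simp only [c, Nat.sub_sub, Nat.choose_symm (by omega : k ≤ n),
      Nat.choose_symm (by omega : k + 1 ≤ n), Nat.choose_symm (by omega : k + 2 ≤ n)]
    rw [mul_sub_mul_add_mul_eq _ _ _ h₁ h₂,
      show ((n - r : ℕ) : ℤ) - (n - k : ℕ) + 1 = k - r + 1 by omega]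
  calc (n.choose r : ℝ) * e (n - r) = c (n - r) := by simp [c, Nat.choose_symm hrn]
    _ = _ := eq_fibZ_convolution c (Nat.sub_le n r)
    _ = _ := by
      rw [hsum]
      simp [c, Nat.cast_sub hrn]

theorem hasDerivAt_zero_of_hasSum_mul_pow {a : ℕ → ℝ} {f : ℝ → ℝ} {R : ℝ} (hR : 0 < R)
    (h : ∀ z, |z| < R → HasSum (fun k => a k * z ^ k) (f z)) : HasDerivAt f (a 1) 0 := by
  set p := FormalMultilinearSeries.ofScalars ℝ a
  set r : NNReal := ⟨R / 2, by positivity⟩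
  have hr : (r : ℝ) < R := show R / 2 < R by linarith
  have hpr : (r : ENNReal) ≤ p.radius := by
    refine p.le_radius_of_summable ?_
    simpa [p, FormalMultilinearSeries.ofScalars_norm, abs_mul]
      using (h r (by rwa [NNReal.abs_eq])).summable.abs
  have hp : HasFPowerSeriesOnBall f p 0 r := by
    refine ⟨hpr, ENNReal.coe_pos.2 (by rw [← NNReal.coe_pos]; exact half_pos hR), fun {y} hy => ?_⟩
    have hy : |y| < r := by simpa using hy
    simpa [p, FormalMultilinearSeries.ofScalars_apply_eq, mul_comm] using h y (hy.trans hr)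
  simpa [p, FormalMultilinearSeries.ofScalars_apply_eq] using hp.hasFPowerSeriesAt.hasDerivAt

theorem hasDerivAt_eulerGenFun (α x : ℝ) :
    HasDerivAt (fun z => (2 / (Real.exp z + 1)) ^ α * Real.exp (x * z)) (x - α / 2) 0 := by
  have hbase : HasDerivAt (fun z => 2 / (Real.exp z + 1)) (-(1 / 2)) 0 := by
    refine ((hasDerivAt_const (0 : ℝ) (2 : ℝ)).div ((Real.hasDerivAt_exp 0).add_const 1)
      (by positivity)).congr_deriv ?_
    norm_num
  have hexp : HasDerivAt (fun z => Real.exp (x * z)) x 0 := by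
    simpa using ((hasDerivAt_id (0 : ℝ)).const_mul x).exp
  refine ((hbase.rpow_const (p := α) (Or.inl (by norm_num))).mul hexp).congr_deriv ?_
  norm_num
  ring

theorem IsGenEulerFamily.apply_zero {E : ℝ → ℝ → ℕ → ℝ} (hE : IsGenEulerFamily E) (α x : ℝ) :
    E α x 0 = 1 := by
  have h := hE α x 0 (by simpa using Real.pi_pos)
  have h0 : HasSum (fun k : ℕ => E α x k * 0 ^ k / (k.factorial : ℝ)) (E α x 0) := by
    simpa using hasSum_single (f := fun k : ℕ => E α x k * 0 ^ k / (k.factorial : ℝ)) 0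
      fun k hk => by simp [hk]
  norm_num [h0.unique h]

theorem IsGenEulerFamily.apply_one {E : ℝ → ℝ → ℕ → ℝ} (hE : IsGenEulerFamily E) (α x : ℝ) :
    E α x 1 = x - α / 2 := by
  have h : ∀ z, |z| < Real.pi → HasSum (fun k => E α x k / k.factorial * z ^ k)
      ((2 / (Real.exp z + 1)) ^ α * Real.exp (x * z)) := fun z hz => by
    simpa only [mul_div_right_comm] using hE α x z hz
  simpa using
    (hasDerivAt_zero_of_hasSum_mul_pow Real.pi_pos h).unique (hasDerivAt_eulerGenFun α x)

theorem euler_fibonacci_identity (E : ℝ → ℝ → ℕ → ℝ) (hE : IsGenEulerFamily E)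
    (n r : ℕ) (hrn : r ≤ n) (α x : ℝ) :
    (Nat.choose n r : ℝ) * E α x (n - r)
      = fibZ ((n : ℤ) - r + 1)
        + (((r : ℝ) + 1) * x - (((r : ℝ) + 1) * α + 2) / 2) * fibZ ((n : ℤ) - r)
        + ∑ k ∈ Finset.Icc (r + 2) n,
            (Nat.choose k r : ℝ) *
              (E α x (k - r)
                - ((k : ℝ) - r) / k *
                  (E α x (k - r - 1)
                    + ((k : ℝ) - r - 1) / ((k : ℝ) - 1) * E α x (k - r - 2))) *
              fibZ ((n : ℤ) - k + 1) ∧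
    (Nat.choose n r : ℝ) * E α x (n - r)
      = fibZ ((n : ℤ) - r + 1)
        + ((n : ℝ) * (x - α / 2) - 1) * fibZ ((n : ℤ) - r)
        + ∑ k ∈ Finset.range (n - 1),
            (Nat.choose n k : ℝ) *
              (E α x (n - k)
                - ((n : ℝ) - k) / ((k : ℝ) + 1) *
                  (E α x (n - k - 1)
                    + ((n : ℝ) - k - 1) / ((k : ℝ) + 2) * E α x (n - k - 2))) *
              fibZ ((k : ℤ) - r + 1) := by
  have h₀ := hE.apply_zero α x
  have h₁ := hE.apply_one α x
  constructor
  · rw [choose_mul_eq_fibZ_sum_Icc (E α x) hrn, h₀, h₁]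
    ring
  · rw [choose_mul_eq_fibZ_sum_range (E α x) hrn, h₀, h₁]
    ring
end
end

section
/- For every real α, every real x and every n ∈ ℕ with n ≥ 2, one has (−1)^n·E^{(α)}_n(x) = L_{n+1} − (x − α/2 + 3)·L_n + Σ_{k=2}^{n} (−1)^k·(E^{(α)}_k(x) + 3·E^{(α)}_{k−1}(x))·L_{n−k+1} + 5·Σ_{k=2}^{n} Σ_{s=0}^{k−2} (−1)^k·2^{k−s−2}·L_{n−k+1}·E^{(α)}_s(x). -/
noncomputable section

/-!
The identity holds for every sequence `e` with `e 0 = 1` once `x - α / 2` is read as `e 1`, and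
for the Euler family `E_0^{(α)}(x) = 1` and `E_1^{(α)}(x) = x - α / 2` are the value and the
derivative at `0` of the generating function. For the sequence identity, swap the double sum:
the inner Lucas sums collapse by `5 ∑_{t ≤ m} (-2)^t L_{m+1-t} = 3 L_{m+2} - L_{m+3}`, and the
remaining single sums telescope.
-/

open Finset FormalMultilinearSeries
open scoped NNReal

theorem Finset.sum_range_add_two_sub {M : Type*} [AddCommGroup M] (f : ℕ → M) (n : ℕ) :
    ∑ i ∈ range n, (f (i + 2) - f i) = f (n + 1) + f n - f 1 - f 0 := by
  calc ∑ i ∈ range n, (f (i + 2) - f i)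
      = ∑ i ∈ range n, ((f (i + 2) + f (i + 1)) - (f (i + 1) + f i)) :=
        sum_congr rfl fun _ _ => by abel
    _ = f (n + 1) + f n - f 1 - f 0 := by
        rw [sum_range_sub (fun i => f (i + 1) + f i)]; abel

theorem lucasSeq_add_two (m : ℕ) : lucasSeq (m + 2) = lucasSeq (m + 1) + lucasSeq m := rfl

theorem five_mul_sum_neg_two_pow_mul_lucasSeq (m : ℕ) :
    5 * ∑ t ∈ range (m + 1), (-2 : ℝ) ^ t * lucasSeq (m + 1 - t)
      = 3 * lucasSeq (m + 2) - lucasSeq (m + 3) := by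
  induction m with
  | zero => norm_num [lucasSeq]
  | succ m ih =>
    have hrec : (lucasSeq (m + 4) : ℝ) = lucasSeq (m + 3) + lucasSeq (m + 2) := by
      exact_mod_cast lucasSeq_add_two (m + 2)
    have hshift : ∑ t ∈ range (m + 1), (-2 : ℝ) ^ (t + 1) * lucasSeq (m + 1 + 1 - (t + 1))
        = -2 * ∑ t ∈ range (m + 1), (-2 : ℝ) ^ t * lucasSeq (m + 1 - t) := by
      rw [mul_sum]
      exact sum_congr rfl fun t _ => by rw [Nat.add_sub_add_right, pow_succ]; ring
    rw [sum_range_succ', hshift, Nat.sub_zero]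
    linear_combination (-2) * ih + hrec

theorem five_mul_sum_Icc_lucasSeq (s n : ℕ) (hsn : s + 2 ≤ n) :
    5 * ∑ k ∈ Icc (s + 2) n, (-1 : ℝ) ^ k * 2 ^ (k - s - 2) * lucasSeq (n - k + 1)
      = (-1) ^ s * (3 * lucasSeq (n - s) - lucasSeq (n - s + 1)) := by
  obtain ⟨m, rfl⟩ : ∃ m, n = s + 2 + m := ⟨n - (s + 2), by omega⟩
  have hshift : ∑ k ∈ Icc (s + 2) (s + 2 + m),
        (-1 : ℝ) ^ k * 2 ^ (k - s - 2) * lucasSeq (s + 2 + m - k + 1)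
      = (-1) ^ s * ∑ t ∈ range (m + 1), (-2 : ℝ) ^ t * lucasSeq (m + 1 - t) := by
    rw [← Ico_add_one_right_eq_Icc, sum_Ico_eq_sum_range, mul_sum,
      show s + 2 + m + 1 - (s + 2) = m + 1 by omega]
    refine sum_congr rfl fun t ht => ?_
    rw [show s + 2 + t - s - 2 = t by omega,
      show s + 2 + m - (s + 2 + t) + 1 = m + 1 - t by simp at ht; omega,
      neg_pow (2 : ℝ), pow_add, pow_add]
    ring
  rw [hshift, mul_left_comm, five_mul_sum_neg_two_pow_mul_lucasSeq,
    show s + 2 + m - s = m + 2 by omega]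

theorem alternating_lucas_identity (e : ℕ → ℝ) (he₀ : e 0 = 1) (n : ℕ) (hn : 2 ≤ n) :
    (-1 : ℝ) ^ n * e n
      = (lucasSeq (n + 1) : ℝ) - (e 1 + 3) * (lucasSeq n : ℝ)
        + ∑ k ∈ Icc 2 n, (-1 : ℝ) ^ k * (e k + 3 * e (k - 1)) * (lucasSeq (n - k + 1) : ℝ)
        + 5 * ∑ k ∈ Icc 2 n, ∑ s ∈ Icc 0 (k - 2),
            (-1 : ℝ) ^ k * 2 ^ (k - s - 2) * (lucasSeq (n - k + 1) : ℝ) * e s := by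
  obtain ⟨m, rfl⟩ : ∃ m, n = m + 2 := ⟨n - 2, by omega⟩
  have hA : ∑ k ∈ Icc 2 (m + 2), (-1 : ℝ) ^ k * (e k + 3 * e (k - 1)) * lucasSeq (m + 2 - k + 1)
      = ∑ i ∈ range (m + 1),
          (-1 : ℝ) ^ i * (e (i + 2) + 3 * e (i + 1)) * lucasSeq (m + 1 - i) := by
    rw [← Ico_add_one_right_eq_Icc, sum_Ico_eq_sum_range, show m + 2 + 1 - 2 = m + 1 by omega]
    refine sum_congr rfl fun i hi => ?_
    rw [show 2 + i - 1 = i + 1 by omega, show m + 2 - (2 + i) + 1 = m + 1 - i by simp at hi; omega,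
      add_comm 2 i, pow_add]
    ring
  have hB : 5 * ∑ k ∈ Icc 2 (m + 2), ∑ s ∈ Icc 0 (k - 2),
        (-1 : ℝ) ^ k * 2 ^ (k - s - 2) * lucasSeq (m + 2 - k + 1) * e s
      = ∑ s ∈ range (m + 1),
          (-1 : ℝ) ^ s * e s * (3 * lucasSeq (m + 2 - s) - lucasSeq (m + 3 - s)) := by
    rw [sum_comm' (t' := range (m + 1)) (s' := fun s => Icc (s + 2) (m + 2))
      (fun k s => by simp only [mem_Icc, mem_range]; omega), mul_sum]
    refine sum_congr rfl fun s hs => ?_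
    rw [← sum_mul, ← mul_assoc, five_mul_sum_Icc_lucasSeq s (m + 2) (by simp at hs; omega),
      show m + 2 - s + 1 = m + 3 - s by simp at hs; omega]
    ring
  set f : ℕ → ℝ := fun i => (-1) ^ i * e i * lucasSeq (m + 3 - i)
  set g : ℕ → ℝ := fun i => (-1) ^ i * e i * lucasSeq (m + 2 - i)
  have htele :
      ∑ i ∈ range (m + 1), (-1 : ℝ) ^ i * (e (i + 2) + 3 * e (i + 1)) * lucasSeq (m + 1 - i)
      + ∑ s ∈ range (m + 1),
          (-1 : ℝ) ^ s * e s * (3 * lucasSeq (m + 2 - s) - lucasSeq (m + 3 - s))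
      = ∑ i ∈ range (m + 1), ((f (i + 2) - f i) - 3 * (g (i + 1) - g i)) := by
    rw [← sum_add_distrib]
    refine sum_congr rfl fun i _ => ?_
    simp only [f, g, show m + 3 - (i + 2) = m + 1 - i by omega,
      show m + 2 - (i + 1) = m + 1 - i by omega, pow_succ]
    ring
  rw [hA, hB, add_assoc, htele, sum_sub_distrib, ← mul_sum, sum_range_add_two_sub, sum_range_sub]
  simp only [f, g, he₀, show m + 3 - (m + 1) = 2 by omega, show m + 3 - (m + 1 + 1) = 1 by omega,
    show m + 2 - (m + 1) = 1 by omega, show m + 3 - 1 = m + 2 by omega, pow_succ, pow_zero,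
    Nat.sub_zero, show lucasSeq 1 = 1 from rfl, show lucasSeq 2 = 3 from rfl]
  push_cast
  ring

theorem le_radius_ofScalars_of_hasSum {c : ℕ → ℝ} {f : ℝ → ℝ} {r : ℝ≥0}
    (h : ∀ z : ℝ, |z| < r → HasSum (fun n => c n * z ^ n) (f z)) :
    (r : ENNReal) ≤ (ofScalars ℝ c).radius := by
  refine ENNReal.le_of_forall_nnreal_lt fun ρ hρ => (ofScalars ℝ c).le_radius_of_summable ?_
  have hsum : Summable fun n => |c n * (ρ : ℝ) ^ n| :=
    summable_abs_iff.mpr (h ρ (by simpa using hρ)).summable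
  simpa [ofScalars_norm, abs_mul] using hsum

theorem hasFPowerSeriesOnBall_ofScalars_of_hasSum {c : ℕ → ℝ} {f : ℝ → ℝ} {r : ℝ≥0}
    (hr : 0 < r) (h : ∀ z : ℝ, |z| < r → HasSum (fun n => c n * z ^ n) (f z)) :
    HasFPowerSeriesOnBall f (ofScalars ℝ c) 0 r where
  r_le := le_radius_ofScalars_of_hasSum h
  r_pos := by simpa using hr
  hasSum {y} hy := by
    rw [Metric.eball_coe, Metric.mem_ball, dist_zero_right, Real.norm_eq_abs] at hy
    simpa [ofScalars_apply_eq, mul_comm] using h y hy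

theorem hasDerivAt_zero_of_hasSum {c : ℕ → ℝ} {f : ℝ → ℝ} {r : ℝ≥0}
    (hr : 0 < r) (h : ∀ z : ℝ, |z| < r → HasSum (fun n => c n * z ^ n) (f z)) :
    HasDerivAt f (c 1) 0 := by
  simpa [ofScalars_apply_eq] using
    (hasFPowerSeriesOnBall_ofScalars_of_hasSum hr h).hasFPowerSeriesAt.hasDerivAt

theorem hasDerivAt_eulerGenFun_zero (α x : ℝ) :
    HasDerivAt (fun z : ℝ => (2 / (Real.exp z + 1)) ^ α * Real.exp (x * z)) (x - α / 2) 0 := by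
  have hq : HasDerivAt (fun z : ℝ => 2 / (Real.exp z + 1)) (-1 / 2) 0 := by
    refine ((hasDerivAt_const (0 : ℝ) (2 : ℝ)).div ((Real.hasDerivAt_exp 0).add_const 1)
      (by positivity)).congr_deriv ?_
    norm_num
  have hexp : HasDerivAt (fun z : ℝ => Real.exp (x * z)) x 0 := by
    simpa using ((hasDerivAt_id (0 : ℝ)).const_mul x).exp
  refine ((hq.rpow_const (p := α) (Or.inl (by norm_num))).mul hexp).congr_deriv ?_
  norm_num
  ring

namespace IsGenEulerFamily

variable {E : ℝ → ℝ → ℕ → ℝ}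

theorem hasSum_div_factorial_mul_pow (hE : IsGenEulerFamily E) (α x : ℝ) {z : ℝ}
    (hz : |z| < (NNReal.pi : ℝ)) :
    HasSum (fun k => E α x k / k.factorial * z ^ k)
      ((2 / (Real.exp z + 1)) ^ α * Real.exp (x * z)) := by
  simpa only [div_mul_eq_mul_div] using hE α x z (by simpa using hz)

theorem apply_zero_s15 (hE : IsGenEulerFamily E) (α x : ℝ) : E α x 0 = 1 := by
  have h := hE.hasSum_div_factorial_mul_pow α x (z := 0) (by simp [Real.pi_pos])
  have h₀ := hasSum_single (f := fun k => E α x k / k.factorial * (0 : ℝ) ^ k) 0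
    fun k hk => by simp [hk]
  norm_num at h₀ h
  exact h₀.unique h

theorem apply_one_s15 (hE : IsGenEulerFamily E) (α x : ℝ) : E α x 1 = x - α / 2 := by
  have h := hasDerivAt_zero_of_hasSum NNReal.pi_pos fun z hz =>
    hE.hasSum_div_factorial_mul_pow α x hz
  simpa using h.unique (hasDerivAt_eulerGenFun_zero α x)

end IsGenEulerFamily

theorem euler_lucas_alternating_identity (E : ℝ → ℝ → ℕ → ℝ) (hE : IsGenEulerFamily E)
    (α x : ℝ) (n : ℕ) (hn : 2 ≤ n) :
    (-1 : ℝ) ^ n * E α x n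
      = (lucasSeq (n + 1) : ℝ) - (x - α / 2 + 3) * (lucasSeq n : ℝ)
        + ∑ k ∈ Finset.Icc 2 n,
            (-1 : ℝ) ^ k * (E α x k + 3 * E α x (k - 1)) * (lucasSeq (n - k + 1) : ℝ)
        + 5 * ∑ k ∈ Finset.Icc 2 n, ∑ s ∈ Finset.Icc 0 (k - 2),
            (-1 : ℝ) ^ k * 2 ^ (k - s - 2) * (lucasSeq (n - k + 1) : ℝ) * E α x s := by
  rw [← hE.apply_one_s15 α x]
  exact alternating_lucas_identity (E α x) (hE.apply_zero_s15 α x) n hn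
end
end
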